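/- (Single-letter form of Theorem 1, tightness of Shannon's inner bound.) Let D ⊆ ℝ² be the set of points (R_1,R_2) with 0 ≤ R_1, 0 ≤ R_2 that are componentwise upper-bounded by some point of the convex hull of {(0,0), (C_{1,1}, C_{2,1}), (C_{1,0}, 0), (0, C_{2,0})}. Then: (a) for every joint probability distribution P on X_1 × X_2, the pair (I_P(X_1;Y_2|X_2), I_P(X_2;Y_1|X_1)) lies in D (Shannon's outer-bound region is contained in D); and (b) every point of D is componentwise upper-bounded by a convex combination of pairs (I_Q(X_1;Y_2|X_2), I_Q(X_2;Y_1|X_1)) where Q ranges over product distributions Q_1 × Q_2 on X_1 × X_2 (so D is contained in Shannon's inner-bound region). -/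

import Mathlib

open Real BigOperators Finset

/-- Entropy of a finite probability vector, with the convention `0 * log 0 = 0`
(automatic since `Real.log 0 = 0`). -/
noncomputable def ent {n : ℕ} (p : Fin n → ℝ) : ℝ := -∑ y, p y * Real.log (p y)

/-- `Q` is a probability distribution on `Fin n`. -/
def IsProbDist {n : ℕ} (Q : Fin n → ℝ) : Prop := (∀ x, 0 ≤ Q x) ∧ ∑ x, Q x = 1

/-- `P` is a joint probability distribution. -/
def IsJointProbDist {m n : ℕ} (P : Fin m → Fin n → ℝ) : Prop :=
  (∀ x1 x2, 0 ≤ P x1 x2) ∧ ∑ x1, ∑ x2, P x1 x2 = 1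

/-- First marginal `P_1`. -/
noncomputable def marg1 {m n : ℕ} (P : Fin m → Fin n → ℝ) (x1 : Fin m) : ℝ := ∑ x2, P x1 x2

/-- Second marginal `P_2`. -/
noncomputable def marg2 {m n : ℕ} (P : Fin m → Fin n → ℝ) (x2 : Fin n) : ℝ := ∑ x1, P x1 x2

/-- Conditional mutual information `I_P(X₁;Y₂|X₂)`; terms with
`P x1 x2 * W2 x1 x2 y2 = 0` vanish, and summands with `marg2 P x2 = 0` vanish
since then `P x1 x2 = 0`. -/
noncomputable def condMI1 {m n t : ℕ} (P : Fin m → Fin n → ℝ)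
    (W2 : Fin m → Fin n → Fin t → ℝ) : ℝ :=
  ∑ x2, ∑ x1, ∑ y2, P x1 x2 * W2 x1 x2 y2 *
    Real.log (W2 x1 x2 y2 / ((∑ x1', P x1' x2 * W2 x1' x2 y2) / marg2 P x2))

/-- Conditional mutual information `I_P(X₂;Y₁|X₁)`. -/
noncomputable def condMI2 {m n t : ℕ} (P : Fin m → Fin n → ℝ)
    (W1 : Fin m → Fin n → Fin t → ℝ) : ℝ :=
  ∑ x1, ∑ x2, ∑ y1, P x1 x2 * W1 x1 x2 y1 *
    Real.log (W1 x1 x2 y1 / ((∑ x2', P x1 x2' * W1 x1 x2' y1) / marg1 P x1))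

/-- Structural assumptions of a generalized push-to-talk two-way channel with
input alphabets `Fin (r1+3)`, `Fin (r2+3)` and output alphabets `Fin (s1+2)`,
`Fin (s2+2)`: both marginal channels are transition matrices; the row of
input `0` of each user is uniform; for each state, the nonzero-input rows are
permutations of the row of input `1` and have constant column sums
(weak symmetry). -/
def GenPTT {r1 r2 s1 s2 : ℕ} (W1 : Fin (r1 + 3) → Fin (r2 + 3) → Fin (s1 + 2) → ℝ)
    (W2 : Fin (r1 + 3) → Fin (r2 + 3) → Fin (s2 + 2) → ℝ) : Prop :=
  (∀ x1 x2 y1, 0 ≤ W1 x1 x2 y1) ∧ (∀ x1 x2 y2, 0 ≤ W2 x1 x2 y2) ∧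
  (∀ x1 x2, ∑ y1, W1 x1 x2 y1 = 1) ∧ (∀ x1 x2, ∑ y2, W2 x1 x2 y2 = 1) ∧
  (∀ x2 y2, W2 0 x2 y2 = 1 / ((s2 : ℝ) + 2)) ∧
  (∀ x2, ∀ x1 : Fin (r1 + 3), x1 ≠ 0 →
    ∃ σ : Equiv.Perm (Fin (s2 + 2)), ∀ y2, W2 x1 x2 y2 = W2 1 x2 (σ y2)) ∧
  (∀ x2, ∀ y2 y2' : Fin (s2 + 2),
    ∑ x1 ∈ Finset.univ.filter (fun x1 => x1 ≠ (0 : Fin (r1 + 3))), W2 x1 x2 y2 =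
    ∑ x1 ∈ Finset.univ.filter (fun x1 => x1 ≠ (0 : Fin (r1 + 3))), W2 x1 x2 y2') ∧
  (∀ x1 y1, W1 x1 0 y1 = 1 / ((s1 : ℝ) + 2)) ∧
  (∀ x1, ∀ x2 : Fin (r2 + 3), x2 ≠ 0 →
    ∃ σ : Equiv.Perm (Fin (s1 + 2)), ∀ y1, W1 x1 x2 y1 = W1 x1 1 (σ y1)) ∧
  (∀ x1, ∀ y1 y1' : Fin (s1 + 2),
    ∑ x2 ∈ Finset.univ.filter (fun x2 => x2 ≠ (0 : Fin (r2 + 3))), W1 x1 x2 y1 =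
    ∑ x2 ∈ Finset.univ.filter (fun x2 => x2 ≠ (0 : Fin (r2 + 3))), W1 x1 x2 y1')

/-- `C_{1,x₂} = log s₂ − H(row of input 1 of Q_{1,x₂})`. -/
noncomputable def C1 {r1 r2 s2 : ℕ} (W2 : Fin (r1 + 3) → Fin (r2 + 3) → Fin (s2 + 2) → ℝ)
    (x2 : Fin (r2 + 3)) : ℝ := Real.log ((s2 : ℝ) + 2) - ent (fun y2 => W2 1 x2 y2)

/-- `C_{2,x₁} = log s₁ − H(row of input 1 of Q_{2,x₁})`. -/
noncomputable def C2 {r1 r2 s1 : ℕ} (W1 : Fin (r1 + 3) → Fin (r2 + 3) → Fin (s1 + 2) → ℝ)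
    (x1 : Fin (r1 + 3)) : ℝ := Real.log ((s1 : ℝ) + 2) - ent (fun y1 => W1 x1 1 y1)

/-- The channel symmetry property: `C_{1,x₂} = C_{1,1}` for all `x₂ ≠ 0` and
`C_{2,x₁} = C_{2,1}` for all `x₁ ≠ 0`. -/
def SymProp {r1 r2 s1 s2 : ℕ} (W1 : Fin (r1 + 3) → Fin (r2 + 3) → Fin (s1 + 2) → ℝ)
    (W2 : Fin (r1 + 3) → Fin (r2 + 3) → Fin (s2 + 2) → ℝ) : Prop :=
  (∀ x2 : Fin (r2 + 3), x2 ≠ 0 → C1 W2 x2 = C1 W2 1) ∧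
  (∀ x1 : Fin (r1 + 3), x1 ≠ 0 → C2 W1 x1 = C2 W1 1)


/-! Fix the other user's input. User 1's symbol `0` yields pure noise and its other symbols form a
weakly symmetric channel, so `I(X;Y) ≤ log |Y| - H(Y|X)` bounds the rate of user 1 by
`C_{1,x₂}` times the probability that it talks (`x₁ ≠ 0`). Splitting the mass of a joint input law
into the four events "who talks", and using `C_{1,x₂} = C_{1,1}` for `x₂ ≠ 0`, dominates its rate
pair by the matching convex combination of the four corners. Conversely every corner is the rate
pair of a product law in which each user is either silent (a point mass at `0`) or uniform on its
nonzero symbols; the latter makes the output uniform, so the bound above is attained. -/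

lemma sum_mul_log_div_nonneg {ι : Type*} [Fintype ι] {a b : ι → ℝ} (ha : ∀ i, 0 ≤ a i)
    (hb : ∀ i, 0 ≤ b i) (hab : ∀ i, b i ≠ 0 → a i ≠ 0) (hs : ∑ i, a i ≤ ∑ i, b i) :
    0 ≤ ∑ i, b i * Real.log (b i / a i) := by
  have key : ∀ i, b i - a i ≤ b i * Real.log (b i / a i) := by
    intro i
    rcases (hb i).eq_or_lt with h | h
    · simp [← h, ha i]
    · have ha' : 0 < a i := (ha i).lt_of_ne' (hab i h.ne')
      have := mul_le_mul_of_nonneg_left (Real.one_sub_inv_le_log_of_pos (div_pos h ha')) h.le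
      rwa [inv_div, mul_sub, mul_one, mul_div_cancel₀ _ h.ne'] at this
  calc 0 ≤ ∑ i, (b i - a i) := by rw [sum_sub_distrib]; linarith
    _ ≤ _ := sum_le_sum fun i _ => key i

lemma sum_mul_eq_of_forall_ne {ι : Type*} [Fintype ι] [DecidableEq ι] (f : ι → ℝ) {g : ι → ℝ}
    (i : ι) {K : ℝ} (hg : ∀ x, x ≠ i → g x = K) :
    ∑ x, f x * g x = f i * g i + (∑ x, f x - f i) * K := by
  rw [← add_sum_erase _ _ (mem_univ i), ← sum_erase_eq_sub (mem_univ i), sum_mul]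
  congr 1
  exact sum_congr rfl fun x hx => by rw [hg x (ne_of_mem_erase hx)]

lemma sum_const_mul_log_div (t : ℕ) (m : ℝ) :
    ∑ _y : Fin t, m / t * Real.log (m / t / m) = -(m * Real.log t) := by
  rcases eq_or_ne m 0 with rfl | hm
  · simp
  rcases Nat.eq_zero_or_pos t with rfl | ht
  · simp
  have ht' : (t : ℝ) ≠ 0 := by positivity
  rw [sum_const, card_univ, Fintype.card_fin, nsmul_eq_mul, div_div_cancel_left' hm,
    Real.log_inv]
  field_simp

/-- `mutualInfo p V` is `I(X;Y)` for the input law `p` through the channel `V`, scaled by the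
total mass of `p`, which need not be normalized: `condMI1` and `condMI2` are sums of it over the
input of the other user. -/
noncomputable def mutualInfo {ι : Type*} [Fintype ι] {t : ℕ} (p : ι → ℝ) (V : ι → Fin t → ℝ) :
    ℝ :=
  ∑ x, ∑ y, p x * V x y * Real.log (V x y / ((∑ x', p x' * V x' y) / ∑ x', p x'))

lemma condMI1_eq_sum_mutualInfo {m n t : ℕ} (P : Fin m → Fin n → ℝ)
    (W : Fin m → Fin n → Fin t → ℝ) :
    condMI1 P W = ∑ x2, mutualInfo (fun x1 => P x1 x2) (fun x1 => W x1 x2) := rfl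

lemma condMI2_eq_sum_mutualInfo {m n t : ℕ} (P : Fin m → Fin n → ℝ)
    (W : Fin m → Fin n → Fin t → ℝ) :
    condMI2 P W = ∑ x1, mutualInfo (P x1) (W x1) := rfl

section MutualInfo

variable {ι : Type*} [Fintype ι] {t : ℕ} {p : ι → ℝ} {V : ι → Fin t → ℝ}

lemma mutualInfo_const_mul (c : ℝ) :
    mutualInfo (fun x => c * p x) V = c * mutualInfo p V := by
  rcases eq_or_ne c 0 with rfl | hc
  · simp [mutualInfo]
  simp only [mutualInfo, mul_assoc, ← mul_sum, mul_div_mul_left _ _ hc]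

lemma mutualInfo_single [DecidableEq ι] (i : ι) :
    mutualInfo (Pi.single i 1) V = 0 := by
  rw [mutualInfo, Fintype.sum_eq_single i fun x hx => by simp [Pi.single_apply, hx]]
  refine sum_eq_zero fun y _ => ?_
  rcases eq_or_ne (V i y) 0 with h | h <;> simp [Pi.single_apply, ite_mul, h]

/-- `I(X;Y) = H(Y) - H(Y|X)`, in unnormalized form. -/
lemma mutualInfo_eq_sub (hp : ∀ x, 0 ≤ p x) (hV : ∀ x y, 0 ≤ V x y) :
    mutualInfo p V = -∑ x, p x * ent (V x) -
      ∑ y, (∑ x, p x * V x y) * Real.log ((∑ x, p x * V x y) / ∑ x, p x) := by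
  have hterm : ∀ x y, p x * V x y * Real.log (V x y / ((∑ x', p x' * V x' y) / ∑ x', p x')) =
      p x * (V x y * Real.log (V x y)) -
        p x * V x y * Real.log ((∑ x', p x' * V x' y) / ∑ x', p x') := by
    intro x y
    rcases eq_or_ne (p x * V x y) 0 with h | h
    · rcases mul_eq_zero.mp h with h | h <;> simp [h]
    have hpos : 0 < p x * V x y := lt_of_le_of_ne (mul_nonneg (hp x) (hV x y)) h.symm
    have hout : 0 < ∑ x', p x' * V x' y :=
      hpos.trans_le (single_le_sum (fun x' _ => mul_nonneg (hp x') (hV x' y)) (mem_univ x))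
    have hmass : 0 < ∑ x', p x' :=
      (lt_of_le_of_ne (hp x) (left_ne_zero_of_mul h).symm).trans_le
        (single_le_sum (fun x' _ => hp x') (mem_univ x))
    rw [Real.log_div (right_ne_zero_of_mul h) (div_pos hout hmass).ne']
    ring
  simp only [mutualInfo, hterm, sum_sub_distrib, ent, mul_neg, sum_neg_distrib, neg_neg, mul_sum]
  rw [sum_comm (f := fun x y => p x * V x y * _)]
  simp only [sum_mul]

/-- `H(Y) ≤ log |Y|`, in unnormalized form. -/
lemma neg_sum_mul_log_div_le {o : Fin t → ℝ} (ho : ∀ y, 0 ≤ o y) :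
    -∑ y, o y * Real.log (o y / ∑ y', o y') ≤ (∑ y, o y) * Real.log t := by
  set m := ∑ y, o y with hm_def
  rcases (sum_nonneg fun y _ => ho y : 0 ≤ m).eq_or_lt with hm | hm
  · simp [show m = 0 from hm.symm, (sum_eq_zero_iff_of_nonneg fun y _ => ho y).mp hm.symm]
  rcases Nat.eq_zero_or_pos t with rfl | ht
  · simp
  have ht' : (0 : ℝ) < t := by exact_mod_cast ht
  have hterm : ∀ y,
      o y * Real.log (o y / (m / t)) = o y * Real.log (o y / m) + o y * Real.log t := by
    intro y
    rcases eq_or_ne (o y) 0 with h | h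
    · simp [h]
    rw [div_div_eq_mul_div, mul_div_right_comm, Real.log_mul (div_ne_zero h hm.ne') ht'.ne']
    ring
  have gibbs := sum_mul_log_div_nonneg (a := fun _ => m / t) (fun _ => by positivity) ho
    (fun _ _ => by positivity) (by simp [hm_def, mul_div_cancel₀ _ ht'.ne'])
  simp only [hterm, sum_add_distrib, ← sum_mul] at gibbs
  linarith

lemma sum_output_eq_sum_input (hrow : ∀ x, ∑ y, V x y = 1) :
    ∑ y, ∑ x, p x * V x y = ∑ x, p x := by
  rw [sum_comm]
  simp only [← mul_sum, hrow, mul_one]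

lemma mutualInfo_le (hp : ∀ x, 0 ≤ p x) (hV : ∀ x y, 0 ≤ V x y) (hrow : ∀ x, ∑ y, V x y = 1) :
    mutualInfo p V ≤ ∑ x, p x * (Real.log t - ent (V x)) := by
  have hout := neg_sum_mul_log_div_le (o := fun y => ∑ x, p x * V x y)
    fun y => sum_nonneg fun x _ => mul_nonneg (hp x) (hV x y)
  rw [sum_output_eq_sum_input hrow] at hout
  rw [mutualInfo_eq_sub hp hV]
  simp only [mul_sub, sum_sub_distrib, ← sum_mul]
  linarith

lemma mutualInfo_eq_of_output_eq (hp : ∀ x, 0 ≤ p x) (hV : ∀ x y, 0 ≤ V x y)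
    (hout : ∀ y, ∑ x, p x * V x y = (∑ x, p x) / t) :
    mutualInfo p V = ∑ x, p x * (Real.log t - ent (V x)) := by
  rw [mutualInfo_eq_sub hp hV]
  simp only [hout]
  rw [sum_const_mul_log_div]
  simp only [mul_sub, sum_sub_distrib, ← sum_mul]
  ring

lemma mutualInfo_nonneg (hp : ∀ x, 0 ≤ p x) (hV : ∀ x y, 0 ≤ V x y)
    (hrow : ∀ x, ∑ y, V x y = 1) : 0 ≤ mutualInfo p V := by
  refine sum_nonneg fun x _ => ?_
  rcases (hp x).eq_or_lt with hpx | hpx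
  · simp [← hpx]
  have hmass : 0 < ∑ x', p x' := hpx.trans_le (single_le_sum (fun x' _ => hp x') (mem_univ x))
  simp only [mul_assoc, ← mul_sum]
  -- `mutualInfo p V = ∑ x, p x * D(V x ‖ output law)`, and each divergence is nonnegative.
  refine mul_nonneg hpx.le (sum_mul_log_div_nonneg
    (fun y => div_nonneg (sum_nonneg fun x' _ => mul_nonneg (hp x') (hV x' y)) hmass.le)
    (hV x) (fun y hy => (div_pos ?_ hmass).ne') ?_)
  · exact (mul_pos hpx ((hV x y).lt_of_ne' hy)).trans_le
      (single_le_sum (fun x' _ => mul_nonneg (hp x') (hV x' y)) (mem_univ x))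
  · rw [← sum_div, sum_output_eq_sum_input hrow, div_self hmass.ne', hrow]

end MutualInfo

lemma condMI1_nonneg {m n t : ℕ} {P : Fin m → Fin n → ℝ} {W : Fin m → Fin n → Fin t → ℝ}
    (hP : ∀ x1 x2, 0 ≤ P x1 x2) (hW : ∀ x1 x2 y, 0 ≤ W x1 x2 y)
    (hrow : ∀ x1 x2, ∑ y, W x1 x2 y = 1) : 0 ≤ condMI1 P W :=
  sum_nonneg fun x2 _ =>
    mutualInfo_nonneg (fun x1 => hP x1 x2) (fun x1 => hW x1 x2) fun x1 => hrow x1 x2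

lemma condMI2_nonneg {m n t : ℕ} {P : Fin m → Fin n → ℝ} {W : Fin m → Fin n → Fin t → ℝ}
    (hP : ∀ x1 x2, 0 ≤ P x1 x2) (hW : ∀ x1 x2 y, 0 ≤ W x1 x2 y)
    (hrow : ∀ x1 x2, ∑ y, W x1 x2 y = 1) : 0 ≤ condMI2 P W :=
  sum_nonneg fun x1 _ => mutualInfo_nonneg (hP x1) (hW x1) (hrow x1)


lemma condMI1_mul {m n t : ℕ} (Q1 : Fin m → ℝ) (Q2 : Fin n → ℝ) (W : Fin m → Fin n → Fin t → ℝ) :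
    condMI1 (fun x1 x2 => Q1 x1 * Q2 x2) W = ∑ x2, Q2 x2 * mutualInfo Q1 fun x1 => W x1 x2 := by
  simp_rw [condMI1_eq_sum_mutualInfo, mul_comm (Q1 _)]
  exact sum_congr rfl fun x2 _ => mutualInfo_const_mul _

lemma condMI2_mul {m n t : ℕ} (Q1 : Fin m → ℝ) (Q2 : Fin n → ℝ) (W : Fin m → Fin n → Fin t → ℝ) :
    condMI2 (fun x1 x2 => Q1 x1 * Q2 x2) W = ∑ x1, Q1 x1 * mutualInfo Q2 (W x1) :=
  sum_congr rfl fun _ _ => mutualInfo_const_mul _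

lemma sum_single_mul {n : ℕ} (i : Fin n) (f : Fin n → ℝ) :
    ∑ x, (Pi.single i 1 : Fin n → ℝ) x * f x = f i := by
  simp [Pi.single_apply]

lemma smul_add_four_mem_convexHull {E : Type*} [AddCommGroup E] [Module ℝ E] (z0 z1 z2 z3 : E)
    {w0 w1 w2 w3 : ℝ} (h0 : 0 ≤ w0) (h1 : 0 ≤ w1) (h2 : 0 ≤ w2) (h3 : 0 ≤ w3)
    (hw : w0 + w1 + w2 + w3 = 1) :
    w0 • z0 + w1 • z1 + w2 • z2 + w3 • z3 ∈ convexHull ℝ {z0, z1, z2, z3} := by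
  have := (convex_convexHull ℝ ({z0, z1, z2, z3} : Set E)).sum_mem (t := univ)
    (w := ![w0, w1, w2, w3]) (z := ![z0, z1, z2, z3])
    (fun i _ => by fin_cases i <;> assumption) (by simp [Fin.sum_univ_four, hw])
    (fun i _ => subset_convexHull ℝ _ (by fin_cases i <;> simp))
  simpa [Fin.sum_univ_four, add_assoc] using this

/-- The channel of one user while the input of the other is fixed: the paper's `Q_{1,x₂}` on the
nonzero inputs, together with the uniform row of the silent input `0`. -/
structure IsPushToTalk {a c : ℕ} (V : Fin (a + 3) → Fin (c + 2) → ℝ) : Prop where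
  nonneg : ∀ x y, 0 ≤ V x y
  sum_eq_one : ∀ x, ∑ y, V x y = 1
  zero_eq : ∀ y, V 0 y = 1 / ((c : ℝ) + 2)
  exists_perm : ∀ x, x ≠ 0 → ∃ σ : Equiv.Perm (Fin (c + 2)), ∀ y, V x y = V 1 (σ y)
  colSum_eq : ∀ y y', ∑ x ∈ univ.filter (· ≠ 0), V x y = ∑ x ∈ univ.filter (· ≠ 0), V x y'

noncomputable def pttCapacity {a c : ℕ} (V : Fin (a + 3) → Fin (c + 2) → ℝ) : ℝ :=
  Real.log ((c : ℝ) + 2) - ent (V 1)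

lemma GenPTT.isPushToTalk_forward {r1 r2 s1 s2 : ℕ}
    {W1 : Fin (r1 + 3) → Fin (r2 + 3) → Fin (s1 + 2) → ℝ}
    {W2 : Fin (r1 + 3) → Fin (r2 + 3) → Fin (s2 + 2) → ℝ} (hW : GenPTT W1 W2) (x2 : Fin (r2 + 3)) :
    IsPushToTalk fun x1 => W2 x1 x2 :=
  ⟨fun x1 => hW.2.1 x1 x2, fun x1 => hW.2.2.2.1 x1 x2, hW.2.2.2.2.1 x2, hW.2.2.2.2.2.1 x2,
    hW.2.2.2.2.2.2.1 x2⟩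

lemma GenPTT.isPushToTalk_backward {r1 r2 s1 s2 : ℕ}
    {W1 : Fin (r1 + 3) → Fin (r2 + 3) → Fin (s1 + 2) → ℝ}
    {W2 : Fin (r1 + 3) → Fin (r2 + 3) → Fin (s2 + 2) → ℝ} (hW : GenPTT W1 W2) (x1 : Fin (r1 + 3)) :
    IsPushToTalk (W1 x1) :=
  ⟨hW.1 x1, hW.2.2.1 x1, hW.2.2.2.2.2.2.2.1 x1, hW.2.2.2.2.2.2.2.2.1 x1, hW.2.2.2.2.2.2.2.2.2 x1⟩

noncomputable def uniformNonzero (n : ℕ) : Fin (n + 3) → ℝ :=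
  fun x => if x = 0 then 0 else ((n : ℝ) + 2)⁻¹

lemma sum_uniformNonzero_mul {n : ℕ} (f : Fin (n + 3) → ℝ) :
    ∑ x, uniformNonzero n x * f x = (∑ x, f x - f 0) / ((n : ℝ) + 2) := by
  simp_rw [mul_comm (uniformNonzero n _)]
  rw [sum_mul_eq_of_forall_ne f 0 (g := uniformNonzero n) fun x hx => if_neg hx]
  simp [uniformNonzero, div_eq_mul_inv]

lemma sum_uniformNonzero (n : ℕ) : ∑ x, uniformNonzero n x = 1 := by
  have : ((n : ℝ) + 2) ≠ 0 := by positivity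
  have h := sum_uniformNonzero_mul (n := n) fun _ => (1 : ℝ)
  simp only [mul_one, sum_const, card_univ, Fintype.card_fin, nsmul_eq_mul] at h
  rw [h]
  field_simp
  push_cast
  ring

lemma sum_uniformNonzero_mul_of_forall_ne {n : ℕ} {f : Fin (n + 3) → ℝ} {K : ℝ}
    (hf : ∀ x, x ≠ 0 → f x = K) : ∑ x, uniformNonzero n x * f x = K := by
  rw [sum_mul_eq_of_forall_ne _ 0 hf, sum_uniformNonzero]
  simp [uniformNonzero]

lemma isProbDist_uniformNonzero (n : ℕ) : IsProbDist (uniformNonzero n) := by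
  refine ⟨fun x => ?_, sum_uniformNonzero n⟩
  unfold uniformNonzero; split_ifs <;> positivity

lemma isProbDist_single {n : ℕ} (i : Fin n) : IsProbDist (Pi.single i 1 : Fin n → ℝ) := by
  refine ⟨fun x => ?_, by simp⟩
  rw [Pi.single_apply]; split_ifs <;> norm_num

namespace IsPushToTalk

variable {a c : ℕ} {V : Fin (a + 3) → Fin (c + 2) → ℝ}

lemma ent_zero (hV : IsPushToTalk V) : ent (V 0) = Real.log ((c : ℝ) + 2) := by
  have : ((c : ℝ) + 2) ≠ 0 := by positivity
  simp only [ent, hV.zero_eq, one_div, Real.log_inv, mul_neg, sum_neg_distrib, sum_const,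
    card_univ, Fintype.card_fin, nsmul_eq_mul, Nat.cast_add, Nat.cast_ofNat, neg_neg]
  field_simp

lemma ent_eq (hV : IsPushToTalk V) {x : Fin (a + 3)} (hx : x ≠ 0) : ent (V x) = ent (V 1) := by
  obtain ⟨σ, hσ⟩ := hV.exists_perm x hx
  simp only [ent, hσ]
  rw [Equiv.sum_comp σ fun y => V 1 y * Real.log (V 1 y)]

lemma sum_mul_log_sub_ent (hV : IsPushToTalk V) (p : Fin (a + 3) → ℝ) :
    ∑ x, p x * (Real.log ((c : ℝ) + 2) - ent (V x)) = (∑ x, p x - p 0) * pttCapacity V := by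
  rw [sum_mul_eq_of_forall_ne p 0 fun x hx => by rw [hV.ent_eq hx], hV.ent_zero, sub_self,
    mul_zero, zero_add]
  rfl

lemma mutualInfo_le (hV : IsPushToTalk V) {p : Fin (a + 3) → ℝ} (hp : ∀ x, 0 ≤ p x) :
    mutualInfo p V ≤ (∑ x, p x - p 0) * pttCapacity V := by
  have := _root_.mutualInfo_le hp hV.nonneg hV.sum_eq_one
  push_cast at this
  rwa [hV.sum_mul_log_sub_ent] at this

lemma sum_sub_zero_eq (hV : IsPushToTalk V) (y : Fin (c + 2)) :
    ∑ x, V x y - V 0 y = ((a : ℝ) + 2) / ((c : ℝ) + 2) := by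
  have hconst : ∀ y', ∑ x, V x y' - V 0 y' = ∑ x, V x y - V 0 y := fun y' => by
    simpa only [filter_ne', sum_erase_eq_sub (mem_univ _)] using hV.colSum_eq y' y
  have htotal : ∑ y', (∑ x, V x y' - V 0 y') = (a : ℝ) + 2 := by
    rw [sum_sub_distrib, sum_comm]
    simp only [hV.sum_eq_one, sum_const, card_univ, Fintype.card_fin, nsmul_eq_mul]
    push_cast
    ring
  rw [sum_congr rfl fun y' _ => hconst y', sum_const, card_univ, Fintype.card_fin,
    nsmul_eq_mul] at htotal
  push_cast at htotal
  rw [eq_div_iff (by positivity)]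
  linarith

lemma mutualInfo_uniformNonzero (hV : IsPushToTalk V) :
    mutualInfo (uniformNonzero a) V = pttCapacity V := by
  have hout : ∀ y,
      ∑ x, uniformNonzero a x * V x y = (∑ x, uniformNonzero a x) / ((c + 2 : ℕ) : ℝ) := by
    intro y
    rw [sum_uniformNonzero_mul, hV.sum_sub_zero_eq, sum_uniformNonzero]
    push_cast
    field_simp
  rw [mutualInfo_eq_of_output_eq (isProbDist_uniformNonzero a).1 hV.nonneg hout]
  push_cast
  rw [hV.sum_mul_log_sub_ent, sum_uniformNonzero]
  simp [uniformNonzero]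

end IsPushToTalk

section TwoWay

variable {r1 r2 s1 s2 : ℕ} {W1 : Fin (r1 + 3) → Fin (r2 + 3) → Fin (s1 + 2) → ℝ}
  {W2 : Fin (r1 + 3) → Fin (r2 + 3) → Fin (s2 + 2) → ℝ}

def cornerPoints (W1 : Fin (r1 + 3) → Fin (r2 + 3) → Fin (s1 + 2) → ℝ)
    (W2 : Fin (r1 + 3) → Fin (r2 + 3) → Fin (s2 + 2) → ℝ) : Set (ℝ × ℝ) :=
  {((0 : ℝ), (0 : ℝ)), (C1 W2 1, C2 W1 1), (C1 W2 0, (0 : ℝ)), ((0 : ℝ), C2 W1 0)}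

def productRates (W1 : Fin (r1 + 3) → Fin (r2 + 3) → Fin (s1 + 2) → ℝ)
    (W2 : Fin (r1 + 3) → Fin (r2 + 3) → Fin (s2 + 2) → ℝ) : Set (ℝ × ℝ) :=
  {q | ∃ Q1 : Fin (r1 + 3) → ℝ, ∃ Q2 : Fin (r2 + 3) → ℝ, IsProbDist Q1 ∧ IsProbDist Q2 ∧
    q = (condMI1 (fun x1 x2 => Q1 x1 * Q2 x2) W2, condMI2 (fun x1 x2 => Q1 x1 * Q2 x2) W1)}

lemma cornerPoints_subset_productRates (hW : GenPTT W1 W2) (hSym : SymProp W1 W2) :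
    cornerPoints W1 W2 ⊆ productRates W1 W2 := by
  have silent1 : ∀ Q2 : Fin (r2 + 3) → ℝ,
      condMI1 (fun x1 x2 => (Pi.single 0 1 : Fin (r1 + 3) → ℝ) x1 * Q2 x2) W2 = 0 :=
    fun Q2 => by simp [condMI1_mul, mutualInfo_single]
  have silent2 : ∀ Q1 : Fin (r1 + 3) → ℝ,
      condMI2 (fun x1 x2 => Q1 x1 * (Pi.single 0 1 : Fin (r2 + 3) → ℝ) x2) W1 = 0 :=
    fun Q1 => by simp [condMI2_mul, mutualInfo_single]
  have talking1 : ∀ Q2 : Fin (r2 + 3) → ℝ,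
      condMI1 (fun x1 x2 => uniformNonzero r1 x1 * Q2 x2) W2 = ∑ x2, Q2 x2 * C1 W2 x2 := by
    intro Q2
    simp only [condMI1_mul, (hW.isPushToTalk_forward _).mutualInfo_uniformNonzero]
    rfl
  have talking2 : ∀ Q1 : Fin (r1 + 3) → ℝ,
      condMI2 (fun x1 x2 => Q1 x1 * uniformNonzero r2 x2) W1 = ∑ x1, Q1 x1 * C2 W1 x1 := by
    intro Q1
    simp only [condMI2_mul, (hW.isPushToTalk_backward _).mutualInfo_uniformNonzero]
    rfl
  rintro q (rfl | rfl | rfl | rfl)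
  · exact ⟨_, _, isProbDist_single 0, isProbDist_single 0, by rw [silent1, silent2]⟩
  · refine ⟨_, _, isProbDist_uniformNonzero r1, isProbDist_uniformNonzero r2, ?_⟩
    rw [talking1, talking2, sum_uniformNonzero_mul_of_forall_ne hSym.1,
      sum_uniformNonzero_mul_of_forall_ne hSym.2]
  · refine ⟨_, _, isProbDist_uniformNonzero r1, isProbDist_single 0, ?_⟩
    rw [talking1, silent2, sum_single_mul]
  · refine ⟨_, _, isProbDist_single 0, isProbDist_uniformNonzero r2, ?_⟩
    rw [silent1, talking2, sum_single_mul]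

lemma exists_mem_convexHull_cornerPoints_ge (hW : GenPTT W1 W2) (hSym : SymProp W1 W2)
    {P : Fin (r1 + 3) → Fin (r2 + 3) → ℝ} (hP : IsJointProbDist P) :
    ∃ p ∈ convexHull ℝ (cornerPoints W1 W2), condMI1 P W2 ≤ p.1 ∧ condMI2 P W1 ≤ p.2 := by
  obtain ⟨hP0, hP1⟩ := hP
  set A := ∑ x1, P x1 0
  set B := ∑ x2, P 0 x2
  -- the probability that both users talk
  set lam := 1 - A - B + P 0 0
  have hrate1 : condMI1 P W2 ≤ (A - P 0 0) * C1 W2 0 + lam * C1 W2 1 :=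
    calc condMI1 P W2 ≤ ∑ x2, (∑ x1, P x1 x2 - P 0 x2) * C1 W2 x2 :=
          sum_le_sum fun x2 _ => (hW.isPushToTalk_forward x2).mutualInfo_le fun x1 => hP0 x1 x2
      _ = _ := by
          rw [sum_mul_eq_of_forall_ne _ 0 hSym.1, sum_sub_distrib, sum_comm, hP1]
          ring
  have hrate2 : condMI2 P W1 ≤ (B - P 0 0) * C2 W1 0 + lam * C2 W1 1 :=
    calc condMI2 P W1 ≤ ∑ x1, (∑ x2, P x1 x2 - P x1 0) * C2 W1 x1 :=
          sum_le_sum fun x1 _ => (hW.isPushToTalk_backward x1).mutualInfo_le (hP0 x1)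
      _ = _ := by
          rw [sum_mul_eq_of_forall_ne _ 0 hSym.2, sum_sub_distrib, hP1]
          ring
  have hlam : 0 ≤ lam := by
    have hrow : ∀ x1, 0 ≤ ∑ x2, P x1 x2 - P x1 0 := fun x1 =>
      sub_nonneg.mpr (single_le_sum (fun x2 _ => hP0 x1 x2) (mem_univ 0))
    have := sub_nonneg.mpr (single_le_sum (fun x1 _ => hrow x1) (mem_univ 0))
    rw [sum_sub_distrib, hP1] at this
    linarith
  refine ⟨_, smul_add_four_mem_convexHull _ _ _ _ (hP0 0 0) hlam
    (sub_nonneg.mpr (single_le_sum (fun x1 _ => hP0 x1 0) (mem_univ 0)))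
    (sub_nonneg.mpr (single_le_sum (fun x2 _ => hP0 0 x2) (mem_univ 0))) (by ring), ?_, ?_⟩
  · simp only [Prod.fst_add, Prod.smul_fst, smul_eq_mul]
    linarith
  · simp only [Prod.snd_add, Prod.smul_snd, smul_eq_mul]
    linarith

end TwoWay

/-- Single-letter form of Theorem 1 (tightness of Shannon's inner bound):
(a) every joint-input rate pair lies in the region `D` of nonnegative pairs
dominated by the convex hull of `{(0,0), (C₁₁,C₂₁), (C₁₀,0), (0,C₂₀)}`;
(b) every point of `D` is componentwise dominated by a point of the convex hull
of the rate pairs of product input distributions. -/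
theorem stmt17 (r1 r2 s1 s2 : ℕ)
    (W1 : Fin (r1 + 3) → Fin (r2 + 3) → Fin (s1 + 2) → ℝ)
    (W2 : Fin (r1 + 3) → Fin (r2 + 3) → Fin (s2 + 2) → ℝ)
    (hW : GenPTT W1 W2) (hSym : SymProp W1 W2)
    (D : Set (ℝ × ℝ))
    (hD : D = {R : ℝ × ℝ | 0 ≤ R.1 ∧ 0 ≤ R.2 ∧
      ∃ p ∈ convexHull ℝ ({((0 : ℝ), (0 : ℝ)), (C1 W2 1, C2 W1 1),
        (C1 W2 0, (0 : ℝ)), ((0 : ℝ), C2 W1 0)} : Set (ℝ × ℝ)),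
        R.1 ≤ p.1 ∧ R.2 ≤ p.2}) :
    (∀ P : Fin (r1 + 3) → Fin (r2 + 3) → ℝ, IsJointProbDist P →
      (condMI1 P W2, condMI2 P W1) ∈ D) ∧
    (∀ R ∈ D, ∃ p ∈ convexHull ℝ {q : ℝ × ℝ |
        ∃ Q1 : Fin (r1 + 3) → ℝ, ∃ Q2 : Fin (r2 + 3) → ℝ,
          IsProbDist Q1 ∧ IsProbDist Q2 ∧
          q = (condMI1 (fun x1 x2 => Q1 x1 * Q2 x2) W2,
               condMI2 (fun x1 x2 => Q1 x1 * Q2 x2) W1)},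
      R.1 ≤ p.1 ∧ R.2 ≤ p.2) := by
  subst hD
  refine ⟨fun P hP => ⟨?_, ?_, exists_mem_convexHull_cornerPoints_ge hW hSym hP⟩, ?_⟩
  · exact condMI1_nonneg hP.1 hW.2.1 hW.2.2.2.1
  · exact condMI2_nonneg hP.1 hW.1 hW.2.2.1
  · rintro R ⟨-, -, p, hp, hRp⟩
    exact ⟨p, convexHull_mono (cornerPoints_subset_productRates hW hSym) hp, hRp⟩
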